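/- arXiv:1505.00048 — 2 statements merged into one kernel-verified Lean document; each statement's English description precedes it below -/
import Mathlib

section
/- Let C be a symmetric monoidal category, let A and B be bicommutative bimonoids in C, and let f, g : A → B be bimonoid homomorphisms. Then the convolution f + g := Δ_A ≫ (f ⊗ g) ≫ μ_B is again a bimonoid homomorphism from A to B, and the convolution zero 0 := ε_A ≫ η_B is a bimonoid homomorphism from A to B. -/
/-!
Write `f + g = Δ ≫ (f ⊗ g) ≫ μ`. Pushing `μ_A` (resp. `Δ_B`) through `f + g` with the bimonoid
axiom of `A` (resp. `B`) and the homomorphism property of `f` and `g` produces a middle-four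
interchange `tensorμ`, which is absorbed by `(μ_B ⊗ μ_B) ≫ μ_B` because `B` is commutative
(resp. by `Δ_A ≫ (Δ_A ⊗ Δ_A)` because `A` is cocommutative). The unit and counit conditions,
and all conditions for `ε_A ≫ η_B`, only use that `η_B ⊗ η_B` multiplies to `η_B` and that
`ε_A ⊗ ε_A` precomposed with `Δ_A` is `ε_A`.
-/

open CategoryTheory MonoidalCategory

universe v u

variable {C : Type u} [Category.{v} C] [MonoidalCategory C]

/-- A bicommutative bimonoid in a braided monoidal category: an object `X` together with a
commutative monoid structure `(μ, η)` and a cocommutative comonoid structure `(Δ, ε)` such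
that `Δ` and `ε` are monoid homomorphisms. -/
structure IsBicommBimon [BraidedCategory C] (X : C) (μ : X ⊗ X ⟶ X) (η : 𝟙_ C ⟶ X)
    (Δ : X ⟶ X ⊗ X) (ε : X ⟶ 𝟙_ C) : Prop where
  mul_assoc : (μ ▷ X) ≫ μ = (α_ X X X).hom ≫ (X ◁ μ) ≫ μ
  one_mul : (η ▷ X) ≫ μ = (λ_ X).hom
  mul_one : (X ◁ η) ≫ μ = (ρ_ X).hom
  mul_comm : (β_ X X).hom ≫ μ = μ
  comul_assoc : Δ ≫ (X ◁ Δ) = Δ ≫ (Δ ▷ X) ≫ (α_ X X X).hom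
  counit_comul : Δ ≫ (ε ▷ X) = (λ_ X).inv
  comul_counit : Δ ≫ (X ◁ ε) = (ρ_ X).inv
  comul_comm : Δ ≫ (β_ X X).hom = Δ
  mul_comul : μ ≫ Δ = (Δ ⊗ₘ Δ) ≫ tensorμ X X X X ≫ (μ ⊗ₘ μ)
  one_comul : η ≫ Δ = (λ_ (𝟙_ C)).inv ≫ (η ⊗ₘ η)
  mul_counit : μ ≫ ε = (ε ⊗ₘ ε) ≫ (λ_ (𝟙_ C)).hom
  one_counit : η ≫ ε = 𝟙 (𝟙_ C)

/-- A bimonoid homomorphism: a morphism commuting with multiplication, unit,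
comultiplication and counit. -/
structure IsBimonHom {A B : C}
    (μA : A ⊗ A ⟶ A) (ηA : 𝟙_ C ⟶ A) (ΔA : A ⟶ A ⊗ A) (εA : A ⟶ 𝟙_ C)
    (μB : B ⊗ B ⟶ B) (ηB : 𝟙_ C ⟶ B) (ΔB : B ⟶ B ⊗ B) (εB : B ⟶ 𝟙_ C)
    (f : A ⟶ B) : Prop where
  hom_mul : μA ≫ f = (f ⊗ₘ f) ≫ μB
  hom_one : ηA ≫ f = ηB
  hom_comul : f ≫ ΔB = ΔA ≫ (f ⊗ₘ f)
  hom_counit : f ≫ εB = εA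

lemma one_tensorHom_one_comp_mul {B : C} {μ : B ⊗ B ⟶ B} {η : 𝟙_ C ⟶ B}
    (mul_one : (B ◁ η) ≫ μ = (ρ_ B).hom) :
    (η ⊗ₘ η) ≫ μ = (λ_ (𝟙_ C)).hom ≫ η := by
  rw [MonoidalCategory.tensorHom_def, Category.assoc, mul_one, rightUnitor_naturality,
    unitors_equal]

lemma comul_comp_counit_tensorHom_counit {A : C} {Δ : A ⟶ A ⊗ A} {ε : A ⟶ 𝟙_ C}
    (comul_counit : Δ ≫ (A ◁ ε) = (ρ_ A).inv) :
    Δ ≫ (ε ⊗ₘ ε) = ε ≫ (λ_ (𝟙_ C)).inv := by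
  rw [tensorHom_def', ← Category.assoc, comul_counit, ← rightUnitor_inv_naturality,
    unitors_inv_equal]

namespace IsBicommBimon

variable [BraidedCategory C] {X : C} {μ : X ⊗ X ⟶ X} {η : 𝟙_ C ⟶ X} {Δ : X ⟶ X ⊗ X}
  {ε : X ⟶ 𝟙_ C}

abbrev monObj (h : IsBicommBimon X μ η Δ ε) : MonObj X where
  one := η
  mul := μ
  one_mul := h.one_mul
  mul_one := h.mul_one
  mul_assoc := h.mul_assoc

abbrev comonObj (h : IsBicommBimon X μ η Δ ε) : ComonObj X where
  counit := ε
  comul := Δ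
  counit_comul := h.counit_comul
  comul_counit := h.comul_counit
  comul_assoc := h.comul_assoc

lemma mul_mul_mul_comm (h : IsBicommBimon X μ η Δ ε) :
    tensorμ X X X X ≫ (μ ⊗ₘ μ) ≫ μ = (μ ⊗ₘ μ) ≫ μ :=
  let := h.monObj
  have : IsCommMonObj X := ⟨h.mul_comm⟩
  MonObj.mul_mul_mul_comm X

open Opposite in
lemma comul_comul_comul_comm (h : IsBicommBimon X μ η Δ ε) :
    Δ ≫ (Δ ⊗ₘ Δ) ≫ tensorμ X X X X = Δ ≫ (Δ ⊗ₘ Δ) := by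
  -- `(Δ.op, ε.op)` is a commutative monoid on `op X` in `Cᵒᵖ`.
  let := Comon.ComonToMonOpOpObjMon (@Comon.mk _ _ _ X h.comonObj)
  have : IsCommMonObj (op X) := ⟨congrArg Quiver.Hom.op h.comul_comm⟩
  have := congrArg Quiver.Hom.unop (MonObj.mul_mul_mul_comm (op X))
  simp only [unop_comp, unop_tensorHom, BraidedCategory.unop_tensorμ, Category.assoc] at this
  exact this

end IsBicommBimon

section Convolution

variable [BraidedCategory C] {A B : C}
  {μA : A ⊗ A ⟶ A} {ηA : 𝟙_ C ⟶ A} {ΔA : A ⟶ A ⊗ A} {εA : A ⟶ 𝟙_ C}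
  {μB : B ⊗ B ⟶ B} {ηB : 𝟙_ C ⟶ B} {ΔB : B ⟶ B ⊗ B} {εB : B ⟶ 𝟙_ C}

lemma isBimonHom_convolution (hA : IsBicommBimon A μA ηA ΔA εA)
    (hB : IsBicommBimon B μB ηB ΔB εB) {f g : A ⟶ B}
    (hf : IsBimonHom μA ηA ΔA εA μB ηB ΔB εB f)
    (hg : IsBimonHom μA ηA ΔA εA μB ηB ΔB εB g) :
    IsBimonHom μA ηA ΔA εA μB ηB ΔB εB (ΔA ≫ (f ⊗ₘ g) ≫ μB) where
  hom_mul := calc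
    μA ≫ ΔA ≫ (f ⊗ₘ g) ≫ μB
        = (ΔA ⊗ₘ ΔA) ≫ tensorμ A A A A ≫ ((μA ≫ f) ⊗ₘ (μA ≫ g)) ≫ μB := by
          rw [reassoc_of% hA.mul_comul, tensorHom_comp_tensorHom_assoc]
    _ = (ΔA ⊗ₘ ΔA) ≫ tensorμ A A A A ≫ ((f ⊗ₘ f) ⊗ₘ (g ⊗ₘ g)) ≫ (μB ⊗ₘ μB) ≫ μB := by
          rw [hf.hom_mul, hg.hom_mul, tensorHom_comp_tensorHom_assoc]
    _ = (ΔA ⊗ₘ ΔA) ≫ ((f ⊗ₘ g) ⊗ₘ (f ⊗ₘ g)) ≫ tensorμ B B B B ≫ (μB ⊗ₘ μB) ≫ μB := by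
          rw [tensorμ_natural_assoc]
    _ = (ΔA ≫ (f ⊗ₘ g) ≫ μB ⊗ₘ ΔA ≫ (f ⊗ₘ g) ≫ μB) ≫ μB := by
          rw [hB.mul_mul_mul_comm]
          simp only [tensorHom_comp_tensorHom_assoc]
  hom_one := by
    rw [reassoc_of% hA.one_comul, tensorHom_comp_tensorHom_assoc, hf.hom_one, hg.hom_one,
      one_tensorHom_one_comp_mul hB.mul_one, Iso.inv_hom_id_assoc]
  hom_comul := calc
    (ΔA ≫ (f ⊗ₘ g) ≫ μB) ≫ ΔB
        = ΔA ≫ (f ⊗ₘ g) ≫ (ΔB ⊗ₘ ΔB) ≫ tensorμ B B B B ≫ (μB ⊗ₘ μB) := by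
          simp only [Category.assoc, hB.mul_comul]
    _ = ΔA ≫ (ΔA ⊗ₘ ΔA) ≫ ((f ⊗ₘ f) ⊗ₘ (g ⊗ₘ g)) ≫ tensorμ B B B B ≫ (μB ⊗ₘ μB) := by
          rw [tensorHom_comp_tensorHom_assoc, hf.hom_comul, hg.hom_comul,
            tensorHom_comp_tensorHom_assoc]
    _ = ΔA ≫ (ΔA ⊗ₘ ΔA) ≫ tensorμ A A A A ≫ ((f ⊗ₘ g) ⊗ₘ (f ⊗ₘ g)) ≫ (μB ⊗ₘ μB) := by
          rw [tensorμ_natural_assoc]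
    _ = ΔA ≫ ((ΔA ≫ (f ⊗ₘ g) ≫ μB) ⊗ₘ (ΔA ≫ (f ⊗ₘ g) ≫ μB)) := by
          rw [reassoc_of% hA.comul_comul_comul_comm]
          simp only [tensorHom_comp_tensorHom]
  hom_counit := by
    rw [Category.assoc, Category.assoc, hB.mul_counit, tensorHom_comp_tensorHom_assoc,
      hf.hom_counit, hg.hom_counit, reassoc_of% comul_comp_counit_tensorHom_counit hA.comul_counit,
      Iso.inv_hom_id, Category.comp_id]

lemma isBimonHom_convolution_zero (hA : IsBicommBimon A μA ηA ΔA εA)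
    (hB : IsBicommBimon B μB ηB ΔB εB) : IsBimonHom μA ηA ΔA εA μB ηB ΔB εB (εA ≫ ηB) where
  hom_mul := by
    rw [reassoc_of% hA.mul_counit, ← tensorHom_comp_tensorHom,
      Category.assoc, one_tensorHom_one_comp_mul hB.mul_one]
  hom_one := by rw [reassoc_of% hA.one_counit]
  hom_comul := by
    rw [Category.assoc, hB.one_comul, ← tensorHom_comp_tensorHom,
      reassoc_of% comul_comp_counit_tensorHom_counit hA.comul_counit]
  hom_counit := by rw [Category.assoc, hB.one_counit, Category.comp_id]

end Convolution

/-- **Convolution of bimonoid homomorphisms is a bimonoid homomorphism, and so is the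
convolution zero.**  Let `C` be a symmetric monoidal category, `A`, `B` bicommutative
bimonoids in `C`, and `f g : A ⟶ B` bimonoid homomorphisms.  Then the convolution
`f + g := ΔA ≫ (f ⊗ g) ≫ μB` is a bimonoid homomorphism, and the convolution zero
`0 := εA ≫ ηB` is a bimonoid homomorphism. -/
theorem convolution_isBimonHom [SymmetricCategory C] {A B : C}
    (μA : A ⊗ A ⟶ A) (ηA : 𝟙_ C ⟶ A) (ΔA : A ⟶ A ⊗ A) (εA : A ⟶ 𝟙_ C)
    (μB : B ⊗ B ⟶ B) (ηB : 𝟙_ C ⟶ B) (ΔB : B ⟶ B ⊗ B) (εB : B ⟶ 𝟙_ C)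
    (hA : IsBicommBimon A μA ηA ΔA εA) (hB : IsBicommBimon B μB ηB ΔB εB)
    (f g : A ⟶ B)
    (hf : IsBimonHom μA ηA ΔA εA μB ηB ΔB εB f)
    (hg : IsBimonHom μA ηA ΔA εA μB ηB ΔB εB g) :
    IsBimonHom μA ηA ΔA εA μB ηB ΔB εB (ΔA ≫ (f ⊗ₘ g) ≫ μB) ∧
      IsBimonHom μA ηA ΔA εA μB ηB ΔB εB (εA ≫ ηB) :=
  ⟨isBimonHom_convolution hA hB hf hg, isBimonHom_convolution_zero hA hB⟩
end

section
/- Let C be a symmetric monoidal category and let A and B be bicommutative bimonoids in C. Then the set of bimonoid homomorphisms from A to B is a commutative monoid under convolution, with addition f + g := Δ_A ≫ (f ⊗ g) ≫ μ_B and identity element 0 := ε_A ≫ η_B. -/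
open CategoryTheory MonoidalCategory

universe v u

variable {C : Type u} [Category.{v} C] [MonoidalCategory C]

/-!
The convolution `f + g` is the composite `Δ_A ≫ (f ⊗ g) ≫ μ_B`. The bimonoid axioms say that
`Δ_A` is a monoid and `μ_B` a comonoid homomorphism; by the medial law, cocommutativity of `A`
makes `Δ_A` a comonoid homomorphism too, and commutativity of `B` makes `μ_B` a monoid
homomorphism. So the convolution of bimonoid homomorphisms is a composite of bimonoid
homomorphisms. Convolution is associative and unital on all of `A ⟶ B`, and commutative by
naturality of the braiding.
-/

section

open MonObj ComonObj Opposite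

lemma Conv.mul_eq_comul_tensorHom_mul {M N : C} [ComonObj M] [MonObj N] (f g : Conv M N) :
    f * g = Δ[M] ≫ (f ⊗ₘ g) ≫ μ[N] :=
  (Δ[M] ≫= MonoidalCategory.tensorHom_def_assoc f g μ[N]).symm

variable [BraidedCategory C]

lemma ComonObj.comul_comul_comul_comm (M : C) [ComonObj M] [IsCommComonObj M] :
    Δ[M] ≫ (Δ[M] ⊗ₘ Δ[M]) ≫ tensorμ M M M M = Δ[M] ≫ (Δ[M] ⊗ₘ Δ[M]) := by
  let _ : MonObj (op M) := Comon.ComonToMonOpOpObjMon (Comon.mk M)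
  have _ : IsCommMonObj (op M) := ⟨Quiver.Hom.unop_inj (IsCommComonObj.comul_comm M)⟩
  have h := congrArg Quiver.Hom.unop (MonObj.mul_mul_mul_comm (op M))
  simp only [unop_comp, BraidedCategory.unop_tensorμ, unop_tensorHom, Category.assoc] at h
  exact h

instance IsCommMonObj.isMonHom_mul (M : C) [MonObj M] [IsCommMonObj M] : IsMonHom μ[M] where
  one_hom := by simp [tensorObj.one_def, ← unitors_equal]
  mul_hom := by simp [tensorObj.mul_def]

instance IsCommComonObj.isComonHom_comul (M : C) [ComonObj M] [IsCommComonObj M] :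
    IsComonHom Δ[M] where
  hom_counit := by simp [← unitors_inv_equal]
  hom_comul := by rw [Comon.tensorObj_comul, ComonObj.comul_comul_comul_comm]

instance ComonObj.isComonHom_tensorHom {M N P Q : C} [ComonObj M] [ComonObj N] [ComonObj P]
    [ComonObj Q] (f : M ⟶ N) (g : P ⟶ Q) [IsComonHom f] [IsComonHom g] :
    IsComonHom (f ⊗ₘ g) where
  hom_counit := by simp
  hom_comul := by
    rw [Comon.tensorObj_comul, Comon.tensorObj_comul, Category.assoc, ← tensorμ_natural,
      tensorHom_comp_tensorHom_assoc, tensorHom_comp_tensorHom_assoc, IsComonHom.hom_comul,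
      IsComonHom.hom_comul]

instance BimonObj.isMonHom_comul (M : C) [BimonObj M] : IsMonHom Δ[M] where
  one_hom := BimonObj.one_comul M
  mul_hom := BimonObj.mul_comul M

instance BimonObj.isComonHom_mul (M : C) [BimonObj M] : IsComonHom μ[M] where
  hom_counit := BimonObj.mul_counit M
  hom_comul := by rw [Comon.tensorObj_comul, Category.assoc]; exact BimonObj.mul_comul M

lemma IsCommComonObj.comul_tensorHom_mul_comm {M N : C} [ComonObj M] [MonObj N]
    [IsCommComonObj M] [IsCommMonObj N] (f g : M ⟶ N) :
    Δ[M] ≫ (f ⊗ₘ g) ≫ μ[N] = Δ[M] ≫ (g ⊗ₘ f) ≫ μ[N] := by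
  conv_rhs => rw [← IsCommComonObj.comul_comm M]
  rw [Category.assoc, ← BraidedCategory.braiding_naturality_assoc, IsCommMonObj.mul_comm]

instance {M N : C} [ComonObj M] [MonObj N] [IsCommComonObj M] [IsCommMonObj N] :
    CommMonoid (Conv M N) where
  mul_comm f g := by
    rw [Conv.mul_eq_comul_tensorHom_mul, Conv.mul_eq_comul_tensorHom_mul]
    exact IsCommComonObj.comul_tensorHom_mul_comm f g

abbrev IsBicommBimon.bimonObj {X : C} {mul : X ⊗ X ⟶ X} {one : 𝟙_ C ⟶ X}
    {comul : X ⟶ X ⊗ X} {counit : X ⟶ 𝟙_ C} (h : IsBicommBimon X mul one comul counit) :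
    BimonObj X where
  one := one
  mul := mul
  one_mul := h.one_mul
  mul_one := h.mul_one
  mul_assoc := h.mul_assoc
  counit := counit
  comul := comul
  counit_comul := h.counit_comul
  comul_counit := h.comul_counit
  comul_assoc := h.comul_assoc
  mul_comul := h.mul_comul
  one_comul := h.one_comul
  mul_counit := h.mul_counit
  one_counit := h.one_counit

lemma isBimonHom_iff {A B : C} [BimonObj A] [BimonObj B] (f : A ⟶ B) :
    IsBimonHom μ[A] η[A] Δ[A] ε[A] μ[B] η[B] Δ[B] ε[B] f ↔ CategoryTheory.IsBimonHom f :=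
  ⟨fun h ↦
    { toIsMonHom := ⟨h.hom_one, h.hom_mul⟩, toIsComonHom := ⟨h.hom_counit, h.hom_comul⟩ },
    fun h ↦ ⟨h.mul_hom, h.one_hom, h.hom_comul, h.hom_counit⟩⟩

variable {A B : C} [BimonObj A] [BimonObj B]

instance BimonObj.isBimonHom_comul_tensorHom_mul [IsCommComonObj A] [IsCommMonObj B]
    (f g : A ⟶ B) [hf : CategoryTheory.IsBimonHom f] [hg : CategoryTheory.IsBimonHom g] :
    CategoryTheory.IsBimonHom (Δ[A] ≫ (f ⊗ₘ g) ≫ μ[B]) := { }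

instance BimonObj.isBimonHom_counit_unit : CategoryTheory.IsBimonHom (ε[A] ≫ η[B]) where
  one_hom := by simp
  mul_hom := by
    rw [Bimon.mul_counit_assoc, ← tensorHom_comp_tensorHom, Category.assoc, one_mul_hom]
  hom_counit := by simp
  hom_comul := by
    rw [Category.assoc, Bimon.one_comul, ← tensorHom_comp_tensorHom, counit_comul_hom_assoc]

variable (A B) in
def bimonHomSubmonoid [IsCommComonObj A] [IsCommMonObj B] : Submonoid (Conv A B) where
  carrier := {f | CategoryTheory.IsBimonHom f}
  mul_mem' {f g} hf hg :=
    Conv.mul_eq_comul_tensorHom_mul f g ▸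
      BimonObj.isBimonHom_comul_tensorHom_mul f g (hf := hf) (hg := hg)
  one_mem' := BimonObj.isBimonHom_counit_unit

end

/-- **The bimonoid homomorphisms between two bicommutative bimonoids form a commutative
monoid under convolution.**  Let `C` be a symmetric monoidal category and `A`, `B`
bicommutative bimonoids in `C`.  Then the set of bimonoid homomorphisms `A ⟶ B` carries a
commutative monoid structure whose addition is the convolution
`f + g := ΔA ≫ (f ⊗ g) ≫ μB` and whose identity element is `0 := εA ≫ ηB`. -/
theorem bimonHom_addCommMonoid [SymmetricCategory C] {A B : C}
    (μA : A ⊗ A ⟶ A) (ηA : 𝟙_ C ⟶ A) (ΔA : A ⟶ A ⊗ A) (εA : A ⟶ 𝟙_ C)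
    (μB : B ⊗ B ⟶ B) (ηB : 𝟙_ C ⟶ B) (ΔB : B ⟶ B ⊗ B) (εB : B ⟶ 𝟙_ C)
    (hA : IsBicommBimon A μA ηA ΔA εA) (hB : IsBicommBimon B μB ηB ΔB εB) :
    ∃ m : AddCommMonoid {f : A ⟶ B // IsBimonHom μA ηA ΔA εA μB ηB ΔB εB f},
      (∀ f g : {f : A ⟶ B // IsBimonHom μA ηA ΔA εA μB ηB ΔB εB f},
        (m.add f g).1 = ΔA ≫ (f.1 ⊗ₘ g.1) ≫ μB) ∧
      m.zero.1 = εA ≫ ηB := by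
  let _ : BimonObj A := hA.bimonObj
  let _ : BimonObj B := hB.bimonObj
  have _ : IsCommComonObj A := ⟨hA.comul_comm⟩
  have _ : IsCommMonObj B := ⟨hB.mul_comm⟩
  let e : {f : A ⟶ B // IsBimonHom μA ηA ΔA εA μB ηB ΔB εB f} ≃
      Additive (bimonHomSubmonoid A B) :=
    (Equiv.subtypeEquivRight isBimonHom_iff).trans Additive.ofMul
  exact ⟨e.addCommMonoid, fun f g ↦ Conv.mul_eq_comul_tensorHom_mul f.1 g.1, rfl⟩
end
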